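/- arXiv:2309.09268 — 5 statements merged into one kernel-verified Lean document; each statement's English description precedes it below -/
import Mathlib

section
/- Let h : ℝ^n → ℝ, γ ∈ (0,1], C = {x | h(x) ≥ 0}, and define C₀ = {x ∈ C | ∃ u ∈ U, h(f(x,u)) ≥ (1-γ)·h(x)}. If h is a quasi-DTCBF (i.e., for all x ∈ C and all u ∈ U satisfying h(f(x,u)) ≥ (1-γ)·h(x), there exists u' ∈ U with h(f(f(x,u),u')) ≥ (1-γ)·h(f(x,u))), then C₀ is controlled invariant: for every x ∈ C₀ there exists u ∈ U with f(x,u) ∈ C₀. -/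
/-- If `h` is a quasi-DTCBF, then the set `C₀` is controlled invariant. -/
theorem qdtcbf_C0_controlled_invariant {n m : ℕ}
    (f : (Fin n → ℝ) × (Fin m → ℝ) → (Fin n → ℝ))
    (U : Set (Fin m → ℝ)) (h : (Fin n → ℝ) → ℝ)
    (γ : ℝ) (hγ0 : 0 < γ) (hγ1 : γ ≤ 1)
    (hq : ∀ x, h x ≥ 0 → ∀ u ∈ U, h (f (x, u)) ≥ (1 - γ) * h x →
      ∃ u' ∈ U, h (f (f (x, u), u')) ≥ (1 - γ) * h (f (x, u))) :
    ∀ x ∈ {x | h x ≥ 0 ∧ ∃ u ∈ U, h (f (x, u)) ≥ (1 - γ) * h x},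
      ∃ u ∈ U, f (x, u) ∈ {x | h x ≥ 0 ∧ ∃ u ∈ U, h (f (x, u)) ≥ (1 - γ) * h x} := by
  rintro x ⟨hx, u, hu, hfu⟩
  refine ⟨u, hu, ?_, ?_⟩
  · have : (1 - γ) * h x ≥ 0 := mul_nonneg (by linarith) hx
    linarith
  · exact hq x hx u hu hfu
end

section
/- For the double integrator dynamics v_{k+1} = v_k + T_s·u_k with T_s > 0, γ_v ∈ (0,1], maximum velocity v̅ > 0, and input set U = [u̲, u̅] with u̲ ≤ 0 ≤ u̅: for every velocity v_k with 0 ≤ v_k ≤ v̅, the interval [max{u̲, -(γ_v/T_s)·v_k}, min{u̅, (γ_v/T_s)·(v̅ - v_k)}] is nonempty, and every u_k in this interval satisfies u_k ∈ U, v_{k+1} ≥ (1-γ_v)·v_k, and v̅ - v_{k+1} ≥ (1-γ_v)·(v̅ - v_k). Hence the two velocity DTCBF certificates h_v̲(x) = v and h_v̅(x) = v̅ - v are jointly feasible subject to input constraints, and C_v̲ ∩ C_v̅ = {(s,v) | 0 ≤ v ≤ v̅} is controlled invariant. -/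
/-- Joint feasibility of the lower- and upper-velocity DTCBF certificates for the double
integrator, and controlled invariance of `{(s,v) | 0 ≤ v ≤ v̅}`. -/
theorem velocity_dtcbf_joint_feasibility (Ts γv vmax ul uu : ℝ)
    (hTs : 0 < Ts) (hγ0 : 0 < γv) (hγ1 : γv ≤ 1) (hvmax : 0 < vmax)
    (hul : ul ≤ 0) (huu : 0 ≤ uu) :
    (∀ v : ℝ, 0 ≤ v → v ≤ vmax →
      max ul (-(γv / Ts) * v) ≤ min uu ((γv / Ts) * (vmax - v)) ∧
      ∀ u : ℝ, max ul (-(γv / Ts) * v) ≤ u → u ≤ min uu ((γv / Ts) * (vmax - v)) →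
        (ul ≤ u ∧ u ≤ uu) ∧
        v + Ts * u ≥ (1 - γv) * v ∧
        vmax - (v + Ts * u) ≥ (1 - γv) * (vmax - v)) ∧
    ∀ x : ℝ × ℝ, 0 ≤ x.2 → x.2 ≤ vmax →
      ∃ u : ℝ, ul ≤ u ∧ u ≤ uu ∧
        0 ≤ x.2 + Ts * u ∧ x.2 + Ts * u ≤ vmax := by
  have hc : 0 < γv / Ts := div_pos hγ0 hTs
  constructor
  · intro v hv0 hv1
    have h1 : -(γv / Ts) * v ≤ 0 := by nlinarith
    have h2 : (0:ℝ) ≤ (γv / Ts) * (vmax - v) := by nlinarith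
    have hm : max ul (-(γv / Ts) * v) ≤ min uu ((γv / Ts) * (vmax - v)) := by
      apply le_trans (max_le hul h1)
      exact le_min huu h2
    refine ⟨hm, fun u hlo hhi => ?_⟩
    have hul' : ul ≤ u := le_trans (le_max_left _ _) hlo
    have huu' : u ≤ uu := le_trans hhi (min_le_left _ _)
    have hlo' : -(γv / Ts) * v ≤ u := le_trans (le_max_right _ _) hlo
    have hhi' : u ≤ (γv / Ts) * (vmax - v) := le_trans hhi (min_le_right _ _)
    have e : γv / Ts * Ts = γv := div_mul_cancel₀ _ hTs.ne'
    refine ⟨⟨hul', huu'⟩, ?_, ?_⟩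
    · nlinarith [mul_le_mul_of_nonneg_left hlo' hTs.le]
    · nlinarith [mul_le_mul_of_nonneg_left hhi' hTs.le]
  · intro x h0 h1
    exact ⟨0, hul, huu, by simpa using h0, by simpa using h1⟩
end

section
/- Recursive feasibility under a terminal DTCBF: suppose h is a DTCBF with linear rate γ ∈ (0,1] for system f with input set U, and H satisfies H(x) ≥ h(x) for all x with h(x) ≥ 0. If at time k there exists a sequence u_0,…,u_{N-1} ∈ U with states x_{j+1} = f(x_j, u_j), x_0 = x_k, satisfying H(x_j) ≥ 0 for j ∈ {1,…,N-2}, h(x_{N-1}) ≥ 0 and h(x_N) ≥ (1-γ)·h(x_{N-1}), then for the next state x_{k+1} = f(x_k, u_0) there exists a sequence u'_0,…,u'_{N-1} ∈ U satisfying the same set of constraints starting from x_{k+1}. -/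
/-- Recursive feasibility of the MPC scheme with terminal DTCBF certificate:
a feasible solution at `x_k` yields a feasible solution at `x_{k+1} = f(x_k, u_0)`. -/
theorem rec_feasibility_terminal_dtcbf {n m : ℕ}
    (f : (Fin n → ℝ) × (Fin m → ℝ) → (Fin n → ℝ))
    (U : Set (Fin m → ℝ)) (h H : (Fin n → ℝ) → ℝ)
    (γ : ℝ) (hγ0 : 0 < γ) (hγ1 : γ ≤ 1) (N : ℕ) (hN : 3 ≤ N)
    (hcbf : ∀ x, h x ≥ 0 → ∃ u ∈ U, h (f (x, u)) ≥ (1 - γ) * h x)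
    (hHh : ∀ x, h x ≥ 0 → H x ≥ h x)
    (xk : Fin n → ℝ) (u : ℕ → (Fin m → ℝ)) (xs : ℕ → (Fin n → ℝ))
    (hx0 : xs 0 = xk)
    (hu : ∀ j < N, u j ∈ U)
    (hdyn : ∀ j < N, xs (j + 1) = f (xs j, u j))
    (hstage : ∀ j, 1 ≤ j → j ≤ N - 2 → H (xs j) ≥ 0)
    (hterm1 : h (xs (N - 1)) ≥ 0)
    (hterm2 : h (xs N) ≥ (1 - γ) * h (xs (N - 1))) :
    ∃ u' : ℕ → (Fin m → ℝ), ∃ xs' : ℕ → (Fin n → ℝ),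
      xs' 0 = f (xk, u 0) ∧
      (∀ j < N, u' j ∈ U) ∧
      (∀ j < N, xs' (j + 1) = f (xs' j, u' j)) ∧
      (∀ j, 1 ≤ j → j ≤ N - 2 → H (xs' j) ≥ 0) ∧
      h (xs' (N - 1)) ≥ 0 ∧
      h (xs' N) ≥ (1 - γ) * h (xs' (N - 1)) := by
  have hN0 : h (xs N) ≥ 0 := le_trans (mul_nonneg (by linarith) hterm1) hterm2
  obtain ⟨us, husU, husP⟩ := hcbf (xs N) hN0
  refine ⟨fun j => if j < N - 1 then u (j + 1) else us,
    fun j => if j < N then xs (j + 1) else f (xs N, us), ?_, ?_, ?_, ?_, ?_, ?_⟩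
  · simp only [if_pos (by omega : 0 < N)]
    rw [hdyn 0 (by omega), hx0]
  · intro j hj
    by_cases hc : j < N - 1
    · beta_reduce; rw [if_pos hc]; exact hu (j + 1) (by omega)
    · beta_reduce; rw [if_neg hc]; exact husU
  · intro j hj
    by_cases hc : j < N - 1
    · beta_reduce; rw [if_pos (by omega : j + 1 < N), if_pos (by omega : j < N), if_pos hc]
      exact hdyn (j + 1) (by omega)
    · have hj' : j = N - 1 := by omega
      subst hj'
      beta_reduce; rw [if_neg (by omega : ¬ N - 1 + 1 < N), if_pos (by omega : N - 1 < N),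
        if_neg (lt_irrefl _), (by omega : N - 1 + 1 = N)]
  · intro j hj1 hj2
    beta_reduce; rw [if_pos (by omega : j < N)]
    by_cases hc : j + 1 ≤ N - 2
    · exact hstage (j + 1) (by omega) hc
    · have : j + 1 = N - 1 := by omega
      rw [this]
      exact le_trans hterm1 (hHh _ hterm1)
  · beta_reduce; rw [if_pos (by omega : N - 1 < N), (by omega : N - 1 + 1 = N)]
    exact hN0
  · beta_reduce; rw [if_neg (lt_irrefl _), if_pos (by omega : N - 1 < N), (by omega : N - 1 + 1 = N)]
    exact husP
end

section
/- Recursive feasibility under a terminal quasi-DTCBF: suppose h is a quasi-DTCBF with rate γ ∈ (0,1] for system f with input set U (for all x with h(x) ≥ 0 and all u ∈ U with h(f(x,u)) ≥ (1-γ)h(x), there exists u' ∈ U with h(f(f(x,u),u')) ≥ (1-γ)h(f(x,u))), and H satisfies H(x) ≥ h(x) whenever h(x) ≥ 0. If at time k a feasible input sequence u_0,…,u_{N-1} ∈ U exists with x_{j+1} = f(x_j,u_j), x_0 = x_k, H(x_j) ≥ 0 for j = 1,…,N-2, h(x_{N-1}) ≥ 0, and h(x_N) ≥ (1-γ)h(x_{N-1}),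 then a feasible sequence with the same constraint structure exists from x_{k+1} = f(x_k, u_0). -/
/-- Recursive feasibility of the MPC scheme with terminal quasi-DTCBF certificate:
a feasible solution at `x_k` yields a feasible solution at `x_{k+1} = f(x_k, u_0)`. -/
theorem rec_feasibility_terminal_qdtcbf {n m : ℕ}
    (f : (Fin n → ℝ) × (Fin m → ℝ) → (Fin n → ℝ))
    (U : Set (Fin m → ℝ)) (h H : (Fin n → ℝ) → ℝ)
    (γ : ℝ) (hγ0 : 0 < γ) (hγ1 : γ ≤ 1) (N : ℕ) (hN : 3 ≤ N)
    (hq : ∀ x, h x ≥ 0 → ∀ u ∈ U, h (f (x, u)) ≥ (1 - γ) * h x →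
      ∃ u' ∈ U, h (f (f (x, u), u')) ≥ (1 - γ) * h (f (x, u)))
    (hHh : ∀ x, h x ≥ 0 → H x ≥ h x)
    (xk : Fin n → ℝ) (u : ℕ → (Fin m → ℝ)) (xs : ℕ → (Fin n → ℝ))
    (hx0 : xs 0 = xk)
    (hu : ∀ j < N, u j ∈ U)
    (hdyn : ∀ j < N, xs (j + 1) = f (xs j, u j))
    (hstage : ∀ j, 1 ≤ j → j ≤ N - 2 → H (xs j) ≥ 0)
    (hterm1 : h (xs (N - 1)) ≥ 0)
    (hterm2 : h (xs N) ≥ (1 - γ) * h (xs (N - 1))) :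
    ∃ u' : ℕ → (Fin m → ℝ), ∃ xs' : ℕ → (Fin n → ℝ),
      xs' 0 = f (xk, u 0) ∧
      (∀ j < N, u' j ∈ U) ∧
      (∀ j < N, xs' (j + 1) = f (xs' j, u' j)) ∧
      (∀ j, 1 ≤ j → j ≤ N - 2 → H (xs' j) ≥ 0) ∧
      h (xs' (N - 1)) ≥ 0 ∧
      h (xs' N) ≥ (1 - γ) * h (xs' (N - 1)) := by
  have hN1 : N - 1 < N := by omega
  have hdN1 : xs N = f (xs (N - 1), u (N - 1)) := by
    have := hdyn (N - 1) hN1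
    have hNe : N - 1 + 1 = N := by omega
    rwa [hNe] at this
  obtain ⟨us, husU, husq⟩ := hq (xs (N - 1)) hterm1 (u (N - 1)) (hu (N - 1) hN1)
    (by rw [← hdN1]; exact hterm2)
  rw [← hdN1] at husq
  refine ⟨fun j => if j < N - 1 then u (j + 1) else us,
    fun j => if j ≤ N - 1 then xs (j + 1) else f (xs N, us), ?_, ?_, ?_, ?_, ?_, ?_⟩
  · simp only [show (0:ℕ) ≤ N - 1 by omega, if_pos]
    rw [hdyn 0 (by omega), hx0]
  · intro j hj
    by_cases hc : j < N - 1
    · simpa [hc] using hu (j + 1) (by omega)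
    · simpa [hc] using husU
  · intro j hj
    by_cases hc : j < N - 1
    · have h1 : j + 1 ≤ N - 1 := by omega
      have h2 : j ≤ N - 1 := by omega
      simp only [h1, h2, if_pos, hc]
      exact hdyn (j + 1) (by omega)
    · have hjN : j = N - 1 := by omega
      subst hjN
      have h1 : ¬ (N - 1 + 1 ≤ N - 1) := by omega
      simp only [h1, if_neg, le_refl, if_pos, if_neg hc]
      congr 1
      have : N - 1 + 1 = N := by omega
      rw [this]
      simp
  · intro j h1j hjN
    have hc : j ≤ N - 1 := by omega
    simp only [hc, if_pos]
    by_cases hc2 : j + 1 ≤ N - 2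
    · exact hstage (j + 1) (by omega) hc2
    · have : j + 1 = N - 1 := by omega
      rw [this]
      simp
      exact le_trans hterm1 (hHh _ hterm1)
  · simp only [show N - 1 ≤ N - 1 from le_refl _, if_pos,
      show N - 1 + 1 = N by omega]
    nlinarith [mul_nonneg (by linarith : (0:ℝ) ≤ 1 - γ) hterm1]
  · have h1 : ¬ (N ≤ N - 1) := by omega
    simp only [h1, if_neg, show N - 1 ≤ N - 1 from le_refl _, if_pos,
      show N - 1 + 1 = N by omega]
    exact husq
end

section
/- If h is a quasi-DTCBF with rate γ ∈ (0,1] for system f with input set U and C₀ = {x | h(x) ≥ 0 ∧ ∃u ∈ U, h(f(x,u)) ≥ (1-γ)h(x)} is nonempty, then every trajectory starting in C₀ under inputs chosen to satisfy the certificate remains in C ∩ C₀ forever: there exists an infinite input sequence (u_j) with u_j ∈ U such that the induced state sequence satisfies x_j ∈ C₀ and h(x_{j+1}) ≥ (1-γ)·h(x_j) ≥ 0 for all j ≥ 0. -/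
/-- Starting from a state in `C₀`, the quasi-DTCBF property yields an infinite
input sequence keeping the trajectory in `C₀` with the certificate satisfied
at every step. -/
theorem qdtcbf_infinite_trajectory {n m : ℕ}
    (f : (Fin n → ℝ) × (Fin m → ℝ) → (Fin n → ℝ))
    (U : Set (Fin m → ℝ)) (h : (Fin n → ℝ) → ℝ)
    (γ : ℝ) (hγ0 : 0 < γ) (hγ1 : γ ≤ 1)
    (hq : ∀ x, h x ≥ 0 → ∀ u ∈ U, h (f (x, u)) ≥ (1 - γ) * h x →
      ∃ u' ∈ U, h (f (f (x, u), u')) ≥ (1 - γ) * h (f (x, u)))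
    (x0 : Fin n → ℝ) (hx0 : h x0 ≥ 0)
    (hx0' : ∃ u ∈ U, h (f (x0, u)) ≥ (1 - γ) * h x0) :
    ∃ u : ℕ → (Fin m → ℝ), ∃ xs : ℕ → (Fin n → ℝ),
      xs 0 = x0 ∧
      (∀ j, u j ∈ U) ∧
      (∀ j, xs (j + 1) = f (xs j, u j)) ∧
      ∀ j, (h (xs j) ≥ 0 ∧ ∃ u' ∈ U, h (f (xs j, u')) ≥ (1 - γ) * h (xs j)) ∧
        h (xs (j + 1)) ≥ (1 - γ) * h (xs j) ∧ (1 - γ) * h (xs j) ≥ 0 := by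
  classical
  have h1γ : (0:ℝ) ≤ 1 - γ := by linarith
  let Good : (Fin n → ℝ) × (Fin m → ℝ) → Prop :=
    fun p => h p.1 ≥ 0 ∧ p.2 ∈ U ∧ h (f p) ≥ (1 - γ) * h p.1
  obtain ⟨u0, hu0U, hu0⟩ := hx0'
  have step : ∀ p, Good p → ∃ u', Good (f p, u') := by
    rintro ⟨x, u⟩ ⟨hx, huU, hfu⟩
    obtain ⟨u', hu'U, hu'⟩ := hq x hx u huU hfu
    exact ⟨u', le_trans (mul_nonneg h1γ hx) hfu, hu'U, hu'⟩
  choose nxt hnxt using step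
  let g : ℕ → {p // Good p} := fun j => Nat.rec ⟨(x0, u0), hx0, hu0U, hu0⟩
    (fun _ p => ⟨(f p.1, nxt p.1 p.2), hnxt p.1 p.2⟩) j
  refine ⟨fun j => (g j).1.2, fun j => (g j).1.1, rfl, fun j => (g j).2.2.1,
    fun j => rfl, ?_⟩
  intro j
  obtain ⟨hx, huU, hfu⟩ := (g j).2
  exact ⟨⟨hx, (g j).1.2, huU, hfu⟩, hfu, mul_nonneg h1γ hx⟩
end
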